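/- Let γ > 0, r₀ > 0, let ψ : (0,r₀) → ℝ be continuous and φ : (0,r₀) → ℝ be absolutely continuous (in particular differentiable a.e.) such that φ(r) ≤ γ r φ'(r) + ψ(r) for a.e. r ∈ (0,r₀). Then the function r ↦ φ(r)/r^{1/γ} + (1/γ) ∫₀^r ψ(s)/s^{1+1/γ} ds is nondecreasing on (0,r₀). -/

import Mathlib

open Set MeasureTheory intervalIntegral

/-!
Multiply by the integrating factor `r ^ (-1/γ)`: on `[a, b] ⊂ (0, r₀)` the function
`G r = φ r * r ^ (-1/γ) + (1/γ) ∫_a^r ψ s / s ^ (1 + 1/γ) ds` is absolutely continuous, and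
the differential inequality says exactly that
`G' = (1/γ) r ^ (-1/γ - 1) (γ r φ' - φ + ψ) ≥ 0` a.e.
By the fundamental theorem of calculus for absolutely continuous functions, `G a ≤ G b`.
-/

theorem AbsolutelyContinuousOnInterval.congr {f g : ℝ → ℝ} {a b : ℝ}
    (hf : AbsolutelyContinuousOnInterval f a b) (hfg : EqOn f g (uIcc a b)) :
    AbsolutelyContinuousOnInterval g a b := by
  refine Filter.Tendsto.congr' ?_ hf
  filter_upwards [Filter.mem_inf_of_right (Filter.mem_principal_self _)] with E hE
  refine Finset.sum_congr rfl fun i hi => ?_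
  rw [hfg (hE.1 i hi).1, hfg (hE.1 i hi).2]

theorem absolutelyContinuousOnInterval_of_sub_eq_integral {f f' : ℝ → ℝ} {a b : ℝ}
    (hf' : IntervalIntegrable f' volume a b)
    (hf : ∀ x ∈ uIcc a b, f x - f a = ∫ t in a..x, f' t) :
    AbsolutelyContinuousOnInterval f a b :=
  ((hf'.absolutelyContinuousOnInterval_intervalIntegral left_mem_uIcc).add
    (contDiffOn_const (c := f a)).absolutelyContinuousOnInterval).congr fun x hx => by
      simp [← hf x hx]

theorem AbsolutelyContinuousOnInterval.le_of_ae_deriv_nonneg {f : ℝ → ℝ} {a b : ℝ}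
    (hf : AbsolutelyContinuousOnInterval f a b) (hab : a ≤ b)
    (hf' : ∀ᵐ x ∂volume.restrict (Ioo a b), 0 ≤ deriv f x) :
    f a ≤ f b := by
  rw [← sub_nonneg, ← hf.integral_deriv_eq_sub]
  rw [Measure.restrict_congr_set Ioo_ae_eq_Icc] at hf'
  exact integral_nonneg_of_ae_restrict hab hf'

theorem setIntegral_Ioo_eq_add_intervalIntegral {g : ℝ → ℝ} {a b c : ℝ}
    (hg : IntegrableOn g (Ioo c b)) (hca : c ≤ a) (hab : a ≤ b) :
    ∫ s in Ioo c b, g s = (∫ s in Ioo c a, g s) + ∫ s in a..b, g s := by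
  have hg' : IntervalIntegrable g volume c b :=
    (intervalIntegrable_iff_integrableOn_Ioo_of_le (hca.trans hab)).2 hg
  have hca' : IntervalIntegrable g volume c a :=
    hg'.mono_set (by rw [uIcc_of_le hca, uIcc_of_le (hca.trans hab)]; gcongr)
  have hab' : IntervalIntegrable g volume a b :=
    hg'.mono_set (by rw [uIcc_of_le hab, uIcc_of_le (hca.trans hab)]; gcongr)
  rw [← integral_Ioc_eq_integral_Ioo, ← integral_Ioc_eq_integral_Ioo, ← integral_of_le hca,
    ← integral_of_le (hca.trans hab)]
  exact (integral_add_adjacent_intervals hca' hab').symm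

theorem gronwall_integrand_nonneg {γ r p p' q : ℝ} (hγ : 0 < γ) (hr : 0 < r)
    (h : p ≤ γ * r * p' + q) :
    0 ≤ p' * r ^ (-(1/γ)) + p * (-(1/γ) * r ^ (-(1/γ) - 1)) + 1/γ * (q / r ^ (1 + 1/γ)) := by
  have hw : 0 < r ^ (-(1/γ) - 1) := Real.rpow_pos_of_pos hr _
  have h1 : r ^ (-(1/γ)) = r * r ^ (-(1/γ) - 1) := by
    rw [← Real.rpow_one_add' hr.le (by ring_nf; simp [hγ.ne'])]; ring_nf
  have h2 : q / r ^ (1 + 1/γ) = q * r ^ (-(1/γ) - 1) := by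
    rw [div_eq_mul_inv, ← Real.rpow_neg hr.le]; ring_nf
  rw [h1, h2]
  calc (0:ℝ) ≤ 1/γ * r ^ (-(1/γ) - 1) * (γ * r * p' + q - p) := by
        have := sub_nonneg.2 h
        positivity
    _ = _ := by field_simp; ring

theorem gronwall_type_le_on_Icc {γ a b : ℝ} {ψ φ φ' : ℝ → ℝ} (hγ : 0 < γ) (ha : 0 < a)
    (hab : a ≤ b) (hψ : ContinuousOn ψ (Icc a b)) (hφ : AbsolutelyContinuousOnInterval φ a b)
    (hderiv : ∀ᵐ x ∂volume.restrict (Ioo a b), HasDerivAt φ (φ' x) x)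
    (hineq : ∀ᵐ x ∂volume.restrict (Ioo a b), φ x ≤ γ * x * φ' x + ψ x) :
    φ a / a ^ (1/γ) ≤ φ b / b ^ (1/γ) + 1/γ * ∫ s in a..b, ψ s / s ^ (1 + 1/γ) := by
  have hI : uIcc a b = Icc a b := uIcc_of_le hab
  have hpos : ∀ x ∈ uIcc a b, 0 < x := fun x hx => ha.trans_le (hI ▸ hx).1
  set g : ℝ → ℝ := fun s => ψ s / s ^ (1 + 1/γ)
  have hg : ContinuousOn g (uIcc a b) :=
    (hI ▸ hψ).div (continuousOn_id.rpow_const fun s hs => Or.inl (hpos s hs).ne')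
      fun s hs => (Real.rpow_pos_of_pos (hpos s hs) _).ne'
  have hg_Ioo : ContinuousOn g (Ioo a b) := hg.mono (hI ▸ Ioo_subset_Icc_self)
  set G : ℝ → ℝ := fun x => φ x * x ^ (-(1/γ)) + 1/γ * ∫ s in a..x, g s
  have hG_ac : AbsolutelyContinuousOnInterval G a b := by
    have hv : AbsolutelyContinuousOnInterval (fun x : ℝ => x ^ (-(1/γ))) a b :=
      (contDiffOn_id.rpow_const_of_ne fun x hx => (hpos x hx).ne').absolutelyContinuousOnInterval
    have hprim : AbsolutelyContinuousOnInterval (fun x => ∫ s in a..x, g s) a b :=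
      hg.intervalIntegrable.absolutelyContinuousOnInterval_intervalIntegral left_mem_uIcc
    exact (hφ.fun_mul hv).fun_add (hprim.const_mul (1/γ))
  have hG' : ∀ᵐ x ∂volume.restrict (Ioo a b), 0 ≤ deriv G x := by
    filter_upwards [hderiv, hineq, ae_restrict_mem measurableSet_Ioo] with x hφx hxineq hmem
    have hx : x ∈ uIcc a b := hI ▸ Ioo_subset_Icc_self hmem
    have hprim : HasDerivAt (fun y => ∫ s in a..y, g s) (g x) x :=
      integral_hasDerivAt_right (hg.mono (uIcc_subset_uIcc_left hx)).intervalIntegrable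
        (hg_Ioo.stronglyMeasurableAtFilter isOpen_Ioo x hmem)
        (hg_Ioo.continuousAt (isOpen_Ioo.mem_nhds hmem))
    have hv : HasDerivAt (fun y : ℝ => y ^ (-(1/γ))) _ x :=
      Real.hasDerivAt_rpow_const (Or.inl (hpos x hx).ne')
    have hG : HasDerivAt G _ x := (hφx.mul hv).add (hprim.const_mul (1/γ))
    rw [hG.deriv]
    exact gronwall_integrand_nonneg hγ (hpos x hx) hxineq
  have hGab := hG_ac.le_of_ae_deriv_nonneg hab hG'
  simpa only [G, integral_same, mul_zero, add_zero, Real.rpow_neg ha.le,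
    Real.rpow_neg (ha.trans_le hab).le, ← div_eq_mul_inv] using hGab

theorem gronwall_type_monotone_general (γ r₀ : ℝ) (hγ : 0 < γ)
    (ψ φ φ' : ℝ → ℝ) (hψcont : ContinuousOn ψ (Ioo 0 r₀))
    -- absolute continuity of φ on (0, r₀):
    (hderiv : ∀ᵐ r ∂(volume.restrict (Ioo 0 r₀)), HasDerivAt φ (φ' r) r)
    (hφ'int : ∀ a b, a ∈ Ioo (0:ℝ) r₀ → b ∈ Ioo (0:ℝ) r₀ → IntervalIntegrable φ' volume a b)
    (hftc : ∀ a b, a ∈ Ioo (0:ℝ) r₀ → b ∈ Ioo (0:ℝ) r₀ →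
      φ b - φ a = ∫ s in a..b, φ' s)
    -- the differential inequality, a.e. on (0, r₀):
    (hineq : ∀ᵐ r ∂(volume.restrict (Ioo 0 r₀)), φ r ≤ γ * r * φ' r + ψ r)
    -- finiteness of the singular integral (otherwise the statement is trivial):
    (hint : IntegrableOn (fun s => ψ s / s ^ (1 + 1/γ)) (Ioo 0 r₀)) :
    MonotoneOn (fun r => φ r / r ^ (1/γ) + (1/γ) * ∫ s in Ioo (0:ℝ) r, ψ s / s ^ (1 + 1/γ))
      (Ioo 0 r₀) := by
  intro a ha b hb hab
  have hsub : Icc a b ⊆ Ioo 0 r₀ := Icc_subset_Ioo ha.1 hb.2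
  have hφ : AbsolutelyContinuousOnInterval φ a b :=
    absolutelyContinuousOnInterval_of_sub_eq_integral (hφ'int a b ha hb)
      fun x hx => hftc a x ha (hsub (uIcc_of_le hab ▸ hx))
  have hab₀ : Ioo a b ⊆ Ioo 0 r₀ := Ioo_subset_Icc_self.trans hsub
  have hle := gronwall_type_le_on_Icc hγ ha.1 hab (hψcont.mono hsub) hφ
    (ae_restrict_of_ae_restrict_of_subset hab₀ hderiv)
    (ae_restrict_of_ae_restrict_of_subset hab₀ hineq)
  have hsplit := setIntegral_Ioo_eq_add_intervalIntegral
    (hint.mono_set (Ioo_subset_Ioo_right hb.2.le)) ha.1.le hab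
  dsimp only
  rw [hsplit]
  linarith

/-- Gronwall-type lemma: if `φ` is absolutely continuous on `(0,r₀)` (encoded by the fact that
it is recovered from its a.e. derivative `φ'` by integration) and satisfies
`φ(r) ≤ γ r φ'(r) + ψ(r)` a.e., with `ψ` continuous, then
`r ↦ φ(r)/r^(1/γ) + (1/γ) ∫₀^r ψ(s)/s^(1+1/γ) ds` is nondecreasing on `(0,r₀)`. -/
theorem gronwall_type_monotone (γ r₀ : ℝ) (hγ : 0 < γ) (hr₀ : 0 < r₀)
    (ψ φ φ' : ℝ → ℝ) (hψcont : ContinuousOn ψ (Ioo 0 r₀))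
    -- absolute continuity of φ on (0, r₀):
    (hderiv : ∀ᵐ r ∂(volume.restrict (Ioo 0 r₀)), HasDerivAt φ (φ' r) r)
    (hφ'int : ∀ a b, a ∈ Ioo (0:ℝ) r₀ → b ∈ Ioo (0:ℝ) r₀ → IntervalIntegrable φ' volume a b)
    (hftc : ∀ a b, a ∈ Ioo (0:ℝ) r₀ → b ∈ Ioo (0:ℝ) r₀ →
      φ b - φ a = ∫ s in a..b, φ' s)
    -- the differential inequality, a.e. on (0, r₀):
    (hineq : ∀ᵐ r ∂(volume.restrict (Ioo 0 r₀)), φ r ≤ γ * r * φ' r + ψ r)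
    -- finiteness of the singular integral (otherwise the statement is trivial):
    (hint : IntegrableOn (fun s => ψ s / s ^ (1 + 1/γ)) (Ioo 0 r₀)) :
    MonotoneOn (fun r => φ r / r ^ (1/γ) + (1/γ) * ∫ s in Ioo (0:ℝ) r, ψ s / s ^ (1 + 1/γ))
      (Ioo 0 r₀) :=
  gronwall_type_monotone_general γ r₀ hγ ψ φ φ' hψcont hderiv hφ'int hftc hineq hint
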